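/- arXiv:2210.07638 — 2 statements merged into one kernel-verified Lean document; each statement's English description precedes it below -/
import Mathlib

section
/- Let c ≥ 1 be an integer, R > 0, and P : ℝ → ℝ → Prop a predicate on pairs of radii. Call a finite sequence of pairs (s_1, t_1), …, (s_c, t_c) admissible if 0 < s_i < t_i for all i, t_i < (1/2)·s_{i+1} for 1 ≤ i ≤ c−1, and t_c < R. Suppose that every admissible sequence contains at least one index i with P s_i t_i. Then there exists r with 0 < r ≤ R such that P s t holds for ALL pairs with 0 < s < t < r. -/
/-- If every `c`-admissible family of pairs of radii below `R` contains a pair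
satisfying `P`, then there is a radius `r ≤ R` below which every pair satisfies `P`. -/
theorem admissible_families_to_all_small_pairs
    (c : ℕ) (hc : 1 ≤ c) (R : ℝ) (hR : 0 < R) (P : ℝ → ℝ → Prop)
    (h : ∀ s t : ℕ → ℝ,
      (∀ i < c, 0 < s i ∧ s i < t i) →
      (∀ i, i + 1 < c → t i < s (i + 1) / 2) →
      t (c - 1) < R →
      ∃ i < c, P (s i) (t i)) :
    ∃ r : ℝ, 0 < r ∧ r ≤ R ∧ ∀ s t : ℝ, 0 < s → s < t → t < r → P s t := by
  by_contra hcon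
  push_neg at hcon
  have fail : ∀ b : ℝ, 0 < b → b ≤ R → ∃ s t : ℝ, 0 < s ∧ s < t ∧ t < b ∧ ¬ P s t :=
    fun b hb hbR => hcon b hb hbR
  -- Build n failing pairs with top bound b ≤ R, by induction on n.
  have key : ∀ n : ℕ, ∀ b : ℝ, 0 < b → b ≤ R →
      ∃ s t : ℕ → ℝ,
        (∀ i < n, 0 < s i ∧ s i < t i ∧ ¬ P (s i) (t i)) ∧
        (∀ i, i + 1 < n → t i < s (i + 1) / 2) ∧
        (1 ≤ n → t (n - 1) < b) := by
    intro n
    induction n with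
    | zero =>
      intro b hb hbR
      exact ⟨fun _ => 1, fun _ => 1, by intro i hi; omega, by intro i hi; omega,
        by intro h1; omega⟩
    | succ n ih =>
      intro b hb hbR
      obtain ⟨s', t', hs', hst', htb', hP'⟩ := fail b hb hbR
      have hs2 : (0:ℝ) < s' / 2 := by linarith
      have hs2R : s' / 2 ≤ R := by linarith
      obtain ⟨s, t, h1, h2, h3⟩ := ih (s' / 2) hs2 hs2R
      refine ⟨fun i => if i = n then s' else s i, fun i => if i = n then t' else t i,
        ?_, ?_, ?_⟩
      · intro i hi
        by_cases hin : i = n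
        · simp [hin, hs', hst', hP']
        · have : i < n := by omega
          simp only [if_neg hin]
          exact h1 i this
      · intro i hi
        have hin : i ≠ n := by omega
        simp only [if_neg hin]
        by_cases hin1 : i + 1 = n
        · have hn1 : 1 ≤ n := by omega
          have := h3 hn1
          have : t i < s' / 2 := by
            have : n - 1 = i := by omega
            rw [this] at h3
            exact h3 hn1
          simp only [hin1, if_pos rfl]
          exact this
        · have : i + 1 < n := by omega
          simp only [if_neg hin1]
          exact h2 i this
      · intro _
        simp only [Nat.add_sub_cancel, if_pos rfl]
        exact htb'
  obtain ⟨s, t, h1, h2, h3⟩ := key c R hR le_rfl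
  obtain ⟨i, hi, hPi⟩ := h s t (fun i hi => ⟨(h1 i hi).1, (h1 i hi).2.1⟩) h2 (h3 hc)
  exact (h1 i hi).2.2 hPi
end

section
/- Let V be a finite-dimensional real inner product space, T : V → V a self-adjoint linear endomorphism, and k a natural number. Then T has at least k negative eigenvalues (counted with multiplicity) if and only if there exists a k-dimensional subspace W ⊆ V such that ⟨T v, v⟩ < 0 for every nonzero v ∈ W. -/
open FiniteDimensional Module

/-!
Diagonalize `T` in an orthonormal eigenbasis `(bᵢ)` with eigenvalues `(μᵢ)`, so that
`⟪T v, v⟫ = ∑ μᵢ vᵢ²`. Summing multiplicities over a set of negative eigenvalues counts the indices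
`i` with `μᵢ` in that set, so the left side says `k ≤ #{i | μᵢ < 0}`. The span of `k` of the
negative `bᵢ` is a negative definite subspace. Conversely, a negative definite `W` meets the span
of the `bᵢ` with `μᵢ ≥ 0` trivially, since the form is nonnegative there, so
`dim W ≤ n - #{i | μᵢ ≥ 0} = #{i | μᵢ < 0}`.
-/

open Module.End Finset Submodule
open scoped RealInnerProductSpace

theorem LinearIndependent.finrank_span_image {R M ι : Type*} [Ring R] [Nontrivial R]
    [StrongRankCondition R] [AddCommGroup M] [Module R M] {v : ι → M} (hv : LinearIndependent R v) (s : Finset ι) :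
    finrank R (span R (v '' s)) = #s := by
  rw [Set.image_eq_range]
  exact (finrank_span_eq_card (hv.comp _ Subtype.val_injective)).trans (Fintype.card_coe s)

theorem OrthonormalBasis.repr_apply_eq_zero_of_mem_span_image {ι 𝕜 E : Type*} [Fintype ι]
    [RCLike 𝕜] [NormedAddCommGroup E] [InnerProductSpace 𝕜 E] (b : OrthonormalBasis ι 𝕜 E)
    {s : Set ι} {v : E} (hv : v ∈ span 𝕜 (b '' s)) {i : ι} (hi : i ∉ s) : b.repr v i = 0 := by
  rw [← b.coe_toBasis, Basis.mem_span_image] at hv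
  rw [← b.coe_toBasis_repr_apply]
  exact Finsupp.notMem_support_iff.1 fun h => hi (hv h)

namespace LinearMap.IsSymmetric

theorem sum_finrank_eigenspace_eq_card {𝕜 E : Type*} [RCLike 𝕜] [NormedAddCommGroup E]
    [InnerProductSpace 𝕜 E] [FiniteDimensional 𝕜 E] {T : E →ₗ[𝕜] E} (hT : T.IsSymmetric)
    {n : ℕ} (hn : finrank 𝕜 E = n) (μs : Finset 𝕜) :
    ∑ μ ∈ μs, finrank 𝕜 (eigenspace T μ) = #{i | (hT.eigenvalues hn i : 𝕜) ∈ μs} := by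
  classical
  simp_rw [← hT.card_filter_eigenvalues_eq hn]
  exact sum_card_fiberwise_eq_card_filter _ _ _

variable {E : Type*} [NormedAddCommGroup E] [InnerProductSpace ℝ E] [FiniteDimensional ℝ E]
  {T : E →ₗ[ℝ] E} (hT : T.IsSymmetric) {n : ℕ} (hn : finrank ℝ E = n)

theorem exists_neg_finset_le_sum_finrank_eigenspace_iff (k : ℕ) :
    (∃ μs : Finset ℝ, (∀ μ ∈ μs, μ < 0) ∧ k ≤ ∑ μ ∈ μs, finrank ℝ (eigenspace T μ)) ↔
      k ≤ #{i | hT.eigenvalues hn i < 0} := by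
  classical
  have hsum (μs : Finset ℝ) : ∑ μ ∈ μs, finrank ℝ (eigenspace T μ) =
      #{i | hT.eigenvalues hn i ∈ μs} :=
    hT.sum_finrank_eigenspace_eq_card hn μs
  simp_rw [hsum]
  constructor
  · rintro ⟨μs, hneg, hk⟩
    exact hk.trans (card_le_card (monotone_filter_right _ fun _ _ => hneg _))
  · intro hk
    refine ⟨{μ ∈ univ.image (hT.eigenvalues hn) | μ < 0}, fun μ hμ => (mem_filter.1 hμ).2, ?_⟩
    simpa using hk

theorem inner_apply_self_eq_sum (v : E) :
    ⟪T v, v⟫ = ∑ i, hT.eigenvalues hn i * (hT.eigenvectorBasis hn).repr v i ^ 2 := by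
  rw [← (hT.eigenvectorBasis hn).repr.inner_map_map, PiLp.inner_apply]
  refine sum_congr rfl fun i _ => ?_
  rw [hT.eigenvectorBasis_apply_self_apply hn, RCLike.inner_apply, conj_trivial]
  simp only [RCLike.ofReal_real_eq_id, id_eq]
  ring

theorem inner_apply_self_eq_sum_of_mem_span {s : Finset (Fin n)} {v : E}
    (hv : v ∈ span ℝ (hT.eigenvectorBasis hn '' s)) :
    ⟪T v, v⟫ = ∑ i ∈ s, hT.eigenvalues hn i * (hT.eigenvectorBasis hn).repr v i ^ 2 := by
  rw [hT.inner_apply_self_eq_sum hn]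
  refine (sum_subset (subset_univ s) fun i _ hi => ?_).symm
  rw [(hT.eigenvectorBasis hn).repr_apply_eq_zero_of_mem_span_image hv hi]
  ring

theorem inner_apply_self_neg_of_mem_span {s : Finset (Fin n)}
    (hs : ∀ i ∈ s, hT.eigenvalues hn i < 0) {v : E}
    (hv : v ∈ span ℝ (hT.eigenvectorBasis hn '' s)) (hv0 : v ≠ 0) : ⟪T v, v⟫ < 0 := by
  obtain ⟨i, hi⟩ : ∃ i, (hT.eigenvectorBasis hn).repr v i ≠ 0 := by
    by_contra! h
    exact hv0 ((hT.eigenvectorBasis hn).repr.map_eq_zero_iff.1 (PiLp.ext h))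
  have his : i ∈ s := by_contra fun his =>
    hi ((hT.eigenvectorBasis hn).repr_apply_eq_zero_of_mem_span_image hv his)
  rw [hT.inner_apply_self_eq_sum_of_mem_span hn hv]
  refine sum_neg' (fun j hj => mul_nonpos_of_nonpos_of_nonneg (hs j hj).le (sq_nonneg _))
    ⟨i, his, mul_neg_of_neg_of_pos (hs i his) (by positivity)⟩

theorem inner_apply_self_nonneg_of_mem_span {s : Finset (Fin n)}
    (hs : ∀ i ∈ s, 0 ≤ hT.eigenvalues hn i) {v : E}
    (hv : v ∈ span ℝ (hT.eigenvectorBasis hn '' s)) : 0 ≤ ⟪T v, v⟫ := by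
  rw [hT.inner_apply_self_eq_sum_of_mem_span hn hv]
  exact sum_nonneg fun i hi => mul_nonneg (hs i hi) (sq_nonneg _)

theorem finrank_le_card_neg_eigenvalues_of_forall_inner_neg {W : Submodule ℝ E}
    (hW : ∀ v ∈ W, v ≠ 0 → ⟪T v, v⟫ < 0) : finrank ℝ W ≤ #{i | hT.eigenvalues hn i < 0} := by
  classical
  set P := span ℝ (hT.eigenvectorBasis hn '' ↑({i | ¬hT.eigenvalues hn i < 0} : Finset (Fin n)))
  have hdisj : Disjoint W P := by
    refine disjoint_def.2 fun v hvW hvP => by_contra fun hv0 => (hW v hvW hv0).not_ge ?_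
    exact hT.inner_apply_self_nonneg_of_mem_span hn (fun i hi => not_lt.1 (mem_filter.1 hi).2) hvP
  have hP : finrank ℝ P = #{i | ¬hT.eigenvalues hn i < 0} :=
    (hT.eigenvectorBasis hn).orthonormal.linearIndependent.finrank_span_image _
  have := finrank_add_finrank_le_of_disjoint hdisj
  have := card_filter_add_card_filter_not (s := univ) (fun i => hT.eigenvalues hn i < 0)
  simp only [card_univ, Fintype.card_fin] at this
  omega

theorem exists_submodule_forall_inner_neg_of_le_card_neg_eigenvalues {k : ℕ}
    (hk : k ≤ #{i | hT.eigenvalues hn i < 0}) :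
    ∃ W : Submodule ℝ E, finrank ℝ W = k ∧ ∀ v ∈ W, v ≠ 0 → ⟪T v, v⟫ < 0 := by
  obtain ⟨s, hs, rfl⟩ := exists_subset_card_eq hk
  exact ⟨_, (hT.eigenvectorBasis hn).orthonormal.linearIndependent.finrank_span_image s,
    fun v hv => hT.inner_apply_self_neg_of_mem_span hn (fun i hi => (mem_filter.1 (hs hi)).2) hv⟩

end LinearMap.IsSymmetric

/-- A self-adjoint endomorphism of a finite-dimensional real inner product space has at
least `k` negative eigenvalues (counted with multiplicity) if and only if there is a
`k`-dimensional subspace on which the associated quadratic form is negative definite. -/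
theorem negative_eigenvalues_iff_negative_subspace
    {V : Type*} [NormedAddCommGroup V] [InnerProductSpace ℝ V] [FiniteDimensional ℝ V]
    (T : V →ₗ[ℝ] V) (hT : ∀ u v : V, inner ℝ (T u) v = (inner ℝ u (T v) : ℝ)) (k : ℕ) :
    (∃ μs : Finset ℝ, (∀ μ ∈ μs, μ < 0) ∧
        k ≤ ∑ μ ∈ μs, finrank ℝ (Module.End.eigenspace T μ)) ↔
    (∃ W : Submodule ℝ V, finrank ℝ W = k ∧
        ∀ v ∈ W, v ≠ 0 → (inner ℝ (T v) v : ℝ) < 0) := by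
  have hT : T.IsSymmetric := hT
  rw [hT.exists_neg_finset_le_sum_finrank_eigenspace_iff rfl]
  exact ⟨hT.exists_submodule_forall_inner_neg_of_le_card_neg_eigenvalues rfl,
    fun ⟨W, hWk, hW⟩ => hWk ▸ hT.finrank_le_card_neg_eigenvalues_of_forall_inner_neg rfl hW⟩
end
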